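/- Let k ≥ 1, n ≥ 1, q ∈ ℚ, and let α = (α₁,…,α_k) ∈ ℕ^k satisfy Σ_{j=1}^k j·α_j = n (so |α| = α₁+⋯+α_k ≥ 1). Then B_{|α|−1}(q)/(α₁!⋯α_k!) = Σ_{i=1}^{k}, over those i with α_i ≥ 1, of (1/n)·(i·q + n − i)·B_{|α|−2}(q)/(α₁!⋯(α_i − 1)!⋯α_k!). -/

import Mathlib

/-!
Lowering `α_i` by one divides `∏ α_j!` by `α_i`, so the right-hand side is
`B_{|α|-2}(q) / (n ∏ α_j!) · ∑_i α_i (i q + n - i)`. Since `∑ i α_i = n` and `∑ α_i = |α|`,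
that sum is `n (q + |α| - 1)`, and `B_{|α|-2}(q) (q + |α| - 1) = B_{|α|-1}(q)`.
-/

open Finset

/-- The Stirling operator of the first kind: `B q m = q(q+1)⋯(q+m-1)`, i.e.
`B q m = B_{m-1}(q)` in the paper's notation, with `B q 0 = B_{-1}(q) = 1`. -/
def B (q : ℚ) (m : ℕ) : ℚ := ∏ i ∈ Finset.range m, (q + i)

theorem B_succ (q : ℚ) (m : ℕ) : B q (m + 1) = B q m * (q + m) :=
  prod_range_succ _ _

theorem prod_factorial_sub_ite_mul {ι : Type*} [Fintype ι] [DecidableEq ι] (f : ι → ℕ) {i : ι}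
    (hi : f i ≠ 0) :
    (∏ j, (f j - if j = i then 1 else 0).factorial) * f i = ∏ j, (f j).factorial := by
  rw [← prod_erase_mul _ _ (mem_univ i), ← prod_erase_mul _ (fun j => (f j).factorial) (mem_univ i),
    if_pos rfl, mul_assoc, mul_comm _ (f i), Nat.mul_factorial_pred hi]
  congr 1
  exact prod_congr rfl fun j hj => by rw [if_neg (ne_of_mem_erase hj), Nat.sub_zero]

theorem sum_div_prod_factorial_sub_ite {ι K : Type*} [Fintype ι] [DecidableEq ι] [Field K]
    [CharZero K] (f : ι → ℕ) (g : ι → K) :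
    ∑ i ∈ univ.filter (fun i => 1 ≤ f i),
        g i / ∏ j, ((f j - if j = i then 1 else 0).factorial : K) =
      (∑ i, g i * f i) / ∏ j, ((f j).factorial : K) := by
  have hP : (∏ j, ((f j).factorial : K)) ≠ 0 :=
    prod_ne_zero_iff.mpr fun j _ => Nat.cast_ne_zero.mpr (Nat.factorial_ne_zero _)
  rw [sum_filter, sum_div]
  refine sum_congr rfl fun i _ => ?_
  split_ifs with hi
  · have hprod := congrArg (Nat.cast : ℕ → K) (prod_factorial_sub_ite_mul f (i := i) (by omega))
    push_cast at hprod
    have hfi : (f i : K) ≠ 0 := Nat.cast_ne_zero.mpr (by omega)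
    rw [← hprod]
    field_simp
  · simp [show f i = 0 by omega]

theorem Finset.sum_ne_zero_of_sum_mul_ne_zero {ι : Type*} (s : Finset ι) (w a : ι → ℕ)
    (h : ∑ j ∈ s, w j * a j ≠ 0) : ∑ j ∈ s, a j ≠ 0 := by
  contrapose! h
  rw [sum_eq_zero_iff] at h
  exact sum_eq_zero fun j hj => by rw [h j hj, mul_zero]

theorem sum_add_sub_mul_eq {ι K : Type*} [Fintype ι] [CommRing K] (w a : ι → K) (q c : K) :
    ∑ i, (w i * q + c - w i) * a i = (∑ i, w i * a i) * (q - 1) + c * ∑ i, a i := by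
  rw [sum_mul, mul_sum, ← sum_add_distrib]
  exact sum_congr rfl fun i _ => by ring

theorem stirling_coeff_recursion_general (k n : ℕ) (hn : 1 ≤ n) (q : ℚ)
    (α : Fin k → ℕ) (hα : ∑ j : Fin k, (j.1 + 1) * α j = n) :
    B q (∑ j, α j) / ∏ j, ((α j).factorial : ℚ) =
      ∑ i ∈ Finset.univ.filter (fun i : Fin k => 1 ≤ α i),
        ((((i.1 + 1 : ℕ) : ℚ) * q + (n : ℚ) - ((i.1 + 1 : ℕ) : ℚ)) / (n : ℚ)) *
          (B q ((∑ j, α j) - 1) /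
            ∏ j, (((α j - if j = i then 1 else 0).factorial : ℚ))) := by
  obtain ⟨s, hs⟩ := Nat.exists_eq_add_one_of_ne_zero
    (sum_ne_zero_of_sum_mul_ne_zero _ (fun j : Fin k => j.1 + 1) α (hα.trans_ne (by omega)))
  have hweight : ∑ i : Fin k, ((i.1 + 1 : ℕ) : ℚ) * α i = n := by exact_mod_cast hα
  have hcount : ∑ i : Fin k, (α i : ℚ) = s + 1 := by exact_mod_cast hs
  have hn0 : (n : ℚ) ≠ 0 := by positivity
  simp only [mul_div_assoc']
  rw [sum_div_prod_factorial_sub_ite, hs, Nat.add_sub_cancel, B_succ]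
  congr 1
  calc B q s * (q + s) = B q s / n * ∑ i : Fin k,
        (((i.1 + 1 : ℕ) : ℚ) * q + n - ((i.1 + 1 : ℕ) : ℚ)) * α i := by
        rw [sum_add_sub_mul_eq, hweight, hcount]; field_simp; ring
    _ = _ := by rw [mul_sum]; exact sum_congr rfl fun i _ => by ring

theorem stirling_coeff_recursion (k n : ℕ) (hk : 1 ≤ k) (hn : 1 ≤ n) (q : ℚ)
    (α : Fin k → ℕ) (hα : ∑ j : Fin k, (j.1 + 1) * α j = n) :
    B q (∑ j, α j) / ∏ j, ((α j).factorial : ℚ) =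
      ∑ i ∈ Finset.univ.filter (fun i : Fin k => 1 ≤ α i),
        ((((i.1 + 1 : ℕ) : ℚ) * q + (n : ℚ) - ((i.1 + 1 : ℕ) : ℚ)) / (n : ℚ)) *
          (B q ((∑ j, α j) - 1) /
            ∏ j, (((α j - if j = i then 1 else 0).factorial : ℚ))) :=
  stirling_coeff_recursion_general k n hn q α hα
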